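/- arXiv:2212.07590 — 6 statements merged into one kernel-verified Lean document; each statement's English description precedes it below -/
import Mathlib

section
/- Let G = (V,E) be a graph whose isoperimetric numbers satisfy ∂_V^{n+1} ≥ ∂_V^n for all n ≥ 1, and let G_c be its universal comparison graph. Then for every n ≥ 1, the vertex boundary in G_c of the set {1, 2, …, n} equals {n+1, n+2, …, n+∂_V^n}. -/
open scoped ENNReal Classical

noncomputable section

/-- A function on a countable vertex set *vanishes at infinity* if every
super-level set `{x : t < |f x|}` with `t > 0` is finite. -/
def VanishesAtInfinity {V : Type*} (f : V → ℝ) : Prop :=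
  ∀ t : ℝ, 0 < t → {x : V | t < |f x|}.Finite

/-- The `k`-th largest value (k ≥ 1, counted with multiplicity) assumed by `|f|`. -/
def kthLargest {V : Type*} (f : V → ℝ) (k : ℕ) : ℝ :=
  sInf {t : ℝ | 0 ≤ t ∧ {x : V | t < |f x|}.Finite ∧ {x : V | t < |f x|}.ncard < k}

/-- The rearrangement of `f` with respect to the labelling `η`, where `η n` is the
vertex carrying label `n + 1`:  `f*(η (k-1)) = k`-th largest value of `|f|`. -/
def rearrangementOf {V : Type*} (η : ℕ → V) (f : V → ℝ) : V → ℝ :=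
  fun v => kthLargest f (Function.invFun η v + 1)

/-- `‖∇f‖_p^p = Σ_{x∼y} |f x - f y|^p`, each edge counted once (value in `ℝ≥0∞`). -/
def gradPPow {V : Type*} (G : SimpleGraph V) (f : V → ℝ) (p : ℝ) : ℝ≥0∞ :=
  ∑' e : G.edgeSet, Sym2.lift
    ⟨fun x y => ENNReal.ofReal (|f x - f y| ^ p), fun x y => by dsimp only; rw [abs_sub_comm]⟩
    (e : Sym2 V)

/-- `‖∇f‖_p = (Σ_{x∼y} |f x - f y|^p)^{1/p}` (value in `ℝ≥0∞`). -/
def gradP {V : Type*} (G : SimpleGraph V) (f : V → ℝ) (p : ℝ) : ℝ≥0∞ :=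
  gradPPow G f p ^ (1 / p)

/-- `‖∇f‖_∞ = sup_{x∼y} |f x - f y|` (value in `ℝ≥0∞`). -/
def gradTop {V : Type*} (G : SimpleGraph V) (f : V → ℝ) : ℝ≥0∞ :=
  ⨆ e : G.edgeSet, Sym2.lift
    ⟨fun x y => ENNReal.ofReal |f x - f y|, fun x y => by dsimp only; rw [abs_sub_comm]⟩
    (e : Sym2 V)

/-- The vertex boundary `∂_V(X)` of a set of vertices. -/
def vertexBoundary {V : Type*} (G : SimpleGraph V) (X : Set V) : Set V :=
  {z : V | z ∉ X ∧ ∃ x ∈ X, G.Adj z x}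

/-- The isoperimetric number `∂_V^n`: the least vertex-perimeter among sets of `n` vertices. -/
def isoNum {V : Type*} (G : SimpleGraph V) (n : ℕ) : ℕ :=
  sInf {m : ℕ | ∃ X : Set V, X.Finite ∧ X.ncard = n ∧
    (vertexBoundary G X).Finite ∧ (vertexBoundary G X).ncard = m}

/-- `∂_V^n` with the convention `∂_V^0 = 1`. -/
def isoNum₀ {V : Type*} (G : SimpleGraph V) (n : ℕ) : ℕ :=
  if n = 0 then 1 else isoNum G n

/-- `b` is a neighbour of `a` larger than `a` in the universal comparison graph:
`(a-1) + ∂_V^{a-1} < b ≤ a + ∂_V^a`. -/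
def cAdj {V : Type*} (G : SimpleGraph V) (a b : ℕ+) : Prop :=
  a < b ∧ (a : ℕ) - 1 + isoNum₀ G ((a : ℕ) - 1) < (b : ℕ) ∧
    (b : ℕ) ≤ (a : ℕ) + isoNum G (a : ℕ)

/-- The universal comparison graph `G_c` of `G`, a graph on the positive integers. -/
def comparisonGraph {V : Type*} (G : SimpleGraph V) : SimpleGraph ℕ+ where
  Adj a b := cAdj G a b ∨ cAdj G b a
  symm := ⟨fun a b h => h.symm⟩
  loopless := ⟨fun a h => by
    rcases h with h | h <;> exact absurd h.1 (lt_irrefl a)⟩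

/-- The lattice graph `(ℤ², ℓ¹)`. -/
def latticeZ2 : SimpleGraph (ℤ × ℤ) where
  Adj x y := |x.1 - y.1| + |x.2 - y.2| = 1
  symm := by
    constructor
    intro x y h
    rw [abs_sub_comm y.1 x.1, abs_sub_comm y.2 x.2]
    exact h
  loopless := by constructor; intro x h; simp at h

/-- The lattice graph `(ℤ^d, ℓ¹)`. -/
def latticeZd (d : ℕ) : SimpleGraph (Fin d → ℤ) where
  Adj x y := (∑ i, |x i - y i|) = 1
  symm := by
    constructor
    intro x y h
    have : ∀ i, |y i - x i| = |x i - y i| := fun i => abs_sub_comm _ _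
    simpa [this] using h
  loopless := by constructor; intro x h; simp at h

/-- `ℓ¹`-norm on `ℤ²`. -/
def l1 (x : ℤ × ℤ) : ℤ := |x.1| + |x.2|

/-- One step of the counterclockwise square spiral on `ℤ²`. -/
def spiralNext : ℤ × ℤ → ℤ × ℤ := fun p =>
  if p.1 = 0 ∧ p.2 = 0 then (1, 0)
  else if p.2 < 0 ∧ |p.1| ≤ -p.2 then (p.1 + 1, p.2)
  else if 0 < p.1 ∧ |p.2| < p.1 then (p.1, p.2 + 1)
  else if 0 < p.2 ∧ p.1 ≤ p.2 ∧ -p.1 < p.2 then (p.1 - 1, p.2)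
  else (p.1, p.2 - 1)
/-- The spiral labelling of `ℤ²` (0-indexed): `spiral (k-1)` is the vertex with
spiral label `k`, so `spiral 0 = (0,0)`, `spiral 1 = (1,0)`, `spiral 2 = (1,1)`, … -/
def spiral : ℕ → ℤ × ℤ := fun n => spiralNext^[n] (0, 0)

/-! The larger neighbours of `a ≥ 1` in `G_c` form the interval `(r (a-1), r a]` with
`r k = k + ∂_V^k` and `r 0 = 1`. The hypothesis makes `r` monotone, so for `a = 1, …, n` these
intervals tile `(1, r n]`, and every element above `n` of that range is reached from some `a ≤ n`. -/

def comparisonReach {V : Type*} (G : SimpleGraph V) (k : ℕ) : ℕ :=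
  k + isoNum₀ G k

section ComparisonReach

variable {V : Type*} (G : SimpleGraph V)

lemma isoNum₀_of_ne_zero {k : ℕ} (hk : k ≠ 0) : isoNum₀ G k = isoNum G k :=
  if_neg hk

@[simp]
lemma comparisonReach_zero : comparisonReach G 0 = 1 := rfl

lemma comparisonReach_of_ne_zero {k : ℕ} (hk : k ≠ 0) :
    comparisonReach G k = k + isoNum G k := by
  rw [comparisonReach, isoNum₀_of_ne_zero G hk]

lemma monotone_comparisonReach (hmono : ∀ n : ℕ, 1 ≤ n → isoNum G n ≤ isoNum G (n + 1)) :
    Monotone (comparisonReach G) := by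
  refine monotone_nat_of_le_succ fun k => ?_
  rw [comparisonReach_of_ne_zero G (k := k + 1) (by omega)]
  rcases Nat.eq_zero_or_pos k with rfl | hk
  · simp
  · rw [comparisonReach_of_ne_zero G hk.ne']
    have := hmono k hk
    omega

lemma cAdj_iff_comparisonReach {a b : ℕ+} :
    cAdj G a b ↔ a < b ∧ comparisonReach G ((a : ℕ) - 1) < b ∧
      (b : ℕ) ≤ comparisonReach G a := by
  rw [comparisonReach_of_ne_zero G a.ne_zero]
  rfl

end ComparisonReach

lemma exists_lt_and_le_succ_of_lt_of_le {α : Type*} [LinearOrder α] {u : ℕ → α} {z : α} {n : ℕ}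
    (h0 : u 0 < z) (hn : z ≤ u n) : ∃ k < n, u k < z ∧ z ≤ u (k + 1) := by
  induction n with
  | zero => exact absurd hn h0.not_ge
  | succ n ih =>
    by_cases hz : z ≤ u n
    · obtain ⟨k, hkn, hk⟩ := ih hz
      exact ⟨k, hkn.trans n.lt_succ_self, hk⟩
    · exact ⟨n, n.lt_succ_self, not_le.1 hz, hn⟩

/-- **Lemma (vertex boundary of initial segments of `G_c`).**  If the isoperimetric
numbers of `G` satisfy `∂_V^{n+1} ≥ ∂_V^n` for all `n ≥ 1`, then in the universal
comparison graph `G_c` the vertex boundary of `{1, 2, …, n}` is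
`{n+1, n+2, …, n+∂_V^n}` for every `n ≥ 1`. -/
theorem comparisonGraph_vertexBoundary_initialSegment {V : Type*} (G : SimpleGraph V)
    (hmono : ∀ n : ℕ, 1 ≤ n → isoNum G n ≤ isoNum G (n + 1))
    (n : ℕ) (hn : 1 ≤ n) :
    vertexBoundary (comparisonGraph G) {i : ℕ+ | (i : ℕ) ≤ n}
      = {i : ℕ+ | n < (i : ℕ) ∧ (i : ℕ) ≤ n + isoNum G n} := by
  have hreach : comparisonReach G n = n + isoNum G n :=
    comparisonReach_of_ne_zero G (by omega)
  ext z
  simp only [vertexBoundary, Set.mem_ofPred_eq, not_le, ← hreach]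
  constructor
  · rintro ⟨hnz, x, hxn, hzx | hxz⟩
    · exact absurd hzx.1 (by rw [← PNat.coe_lt_coe]; omega)
    · exact ⟨hnz, ((cAdj_iff_comparisonReach G).1 hxz).2.2.trans
        (monotone_comparisonReach G hmono hxn)⟩
  · rintro ⟨hnz, hz⟩
    obtain ⟨k, hkn, hkz, hzk⟩ :=
      exists_lt_and_le_succ_of_lt_of_le (u := comparisonReach G) (z := (z : ℕ))
        (by rw [comparisonReach_zero]; omega) hz
    refine ⟨hnz, k.succPNat, by simpa using hkn, Or.inr ?_⟩
    refine (cAdj_iff_comparisonReach G).2 ⟨?_, by simpa using hkz, by simpa using hzk⟩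
    rw [← PNat.coe_lt_coe, Nat.succPNat_coe]
    omega
end
end

section
/- (Comparison Lemma) Let G = (V,E) be a connected graph with countably infinite vertex set in which every vertex has finite degree and whose isoperimetric numbers satisfy ∂_V^{n+1} ≥ ∂_V^n for all n ≥ 1. Let f : V → ℝ_{≥0} be a function vanishing at infinity and let f_c be its comparison function on the universal comparison graph G_c = (ℕ_{≥1}, E_c). Then for every p ≥ 1, Σ_{(x,y) ∈ E_c} |f_c(x) − f_c(y)|^p ≤ Σ_{(x,y) ∈ E} |f(x) − f(y)|^p. -/
open scoped ENNReal Classical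

noncomputable section

/-!
Writing `(a - b) ^ p = ∫ t in b..a, p * (a - t) ^ (p - 1)`, both sides become integrals over
levels `t`, and it suffices to compare the integrands at each level `t > 0`. Every `i ≥ 2` has
exactly one smaller neighbour `parent i` in `G_c`, and with `m = #{t < f}` the edges
`{parent i, i}` contributing at level `t` are those with `i ∈ (m, lastChild m]`. For such `i` the
set `A = {f_c (parent i) ≤ f}` lies in `{t < f}` and has at least `parent i` elements, so the
monotonicity of `∂_V^n` leaves at least `lastChild (parent i) - m ≥ i - m` boundary vertices of
`A` at or below level `t`. By Hall's theorem the contributing edges of `G_c` can thus be matched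
with distinct edges of `G` crossing level `t` whose upper endpoint is at least `f_c (parent i)`;
for `p ≥ 1` the integrand grows with the upper endpoint.
-/

open MeasureTheory Set

def layerDensity (p a b : ℝ) : ℝ → ℝ≥0∞ :=
  (Ico b a).indicator fun s => ENNReal.ofReal (p * (a - s) ^ (p - 1))

theorem measurable_layerDensity (p a b : ℝ) : Measurable (layerDensity p a b) :=
  Measurable.indicator (by fun_prop) measurableSet_Ico

theorem lintegral_layerDensity {p a b : ℝ} (hp : 1 ≤ p) (hba : b ≤ a) :
    ∫⁻ t, layerDensity p a b t = ENNReal.ofReal ((a - b) ^ p) := by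
  have hderiv (s : ℝ) : HasDerivAt (fun s => -(a - s) ^ p) (p * (a - s) ^ (p - 1)) s := by
    have hsub : HasDerivAt (fun s : ℝ => a - s) (-1) s := (hasDerivAt_id s).const_sub a
    exact (hsub.rpow_const (Or.inr hp)).neg.congr_deriv (by ring)
  have hcont : Continuous fun s => p * (a - s) ^ (p - 1) := by
    have := Real.continuous_rpow_const (q := p - 1) (by linarith)
    fun_prop
  rw [layerDensity, lintegral_indicator measurableSet_Ico,
    Measure.restrict_congr_set Ico_ae_eq_Ioc, ← ofReal_integral_eq_lintegral_ofReal,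
    ← intervalIntegral.integral_of_le hba,
    intervalIntegral.integral_eq_sub_of_hasDerivAt (fun s _ => hderiv s)
      (hcont.intervalIntegrable _ _)]
  · simp [Real.zero_rpow (by positivity : p ≠ 0)]
  · exact hcont.integrableOn_Icc.mono_set Ioc_subset_Icc_self
  · filter_upwards [ae_restrict_mem measurableSet_Ioc] with s hs
    have : 0 ≤ a - s := by linarith [hs.2]
    positivity

theorem layerDensity_le_layerDensity {p a a' b b' t : ℝ} (hp : 1 ≤ p) (hb : b' ≤ t)
    (ha : a ≤ a') : layerDensity p a b t ≤ layerDensity p a' b' t := by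
  by_cases ht : t ∈ Ico b a
  · rw [layerDensity, layerDensity, indicator_of_mem ht,
      indicator_of_mem (show t ∈ Ico b' a' from ⟨hb, ht.2.trans_le ha⟩)]
    gcongr
    linarith [ht.2]
  · simp [layerDensity, indicator_of_notMem ht]

section kthLargest

variable {V : Type*} {f : V → ℝ}

theorem kthLargest_zero (f : V → ℝ) : kthLargest f 0 = 0 := by
  simp [kthLargest]

theorem kthLargest_nonneg (f : V → ℝ) (k : ℕ) : 0 ≤ kthLargest f k :=
  Real.sInf_nonneg fun _ ht => ht.1

namespace VanishesAtInfinity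

theorem kthLargest_le_iff (hf : VanishesAtInfinity f) {k : ℕ} (hk : k ≠ 0) {t : ℝ}
    (ht : 0 < t) : kthLargest f k ≤ t ↔ {x | t < |f x|}.ncard < k := by
  refine ⟨fun h => ?_, fun h => csInf_le ⟨0, fun _ hs => hs.1⟩ ⟨ht.le, hf t ht, h⟩⟩
  have hne :
      {s : ℝ | 0 ≤ s ∧ {x | s < |f x|}.Finite ∧ {x | s < |f x|}.ncard < k}.Nonempty := by
    obtain ⟨s, hs, hs1⟩ := ((hf 1 one_pos).eventually_all.2
      fun x _ => Filter.eventually_gt_atTop |f x|).and (Filter.eventually_ge_atTop 1) |>.exists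
    have hempty : {x | s < |f x|} = ∅ :=
      eq_empty_of_forall_notMem fun x hx => (hs x (hs1.trans_lt hx)).not_gt hx
    exact ⟨s, by linarith, by simp [hempty], by simp [hempty]; omega⟩
  -- `t ↦ #{t < |f|}` is right-continuous, since no value of `|f|` lies just above `t`
  obtain ⟨s, hs, hts⟩ := (((hf t ht).eventually_all.2
    fun x (hx : t < |f x|) => eventually_lt_nhds hx).filter_mono nhdsWithin_le_nhds
    |>.and self_mem_nhdsWithin).exists (f := nhdsWithin t (Ioi t))
  obtain ⟨d, ⟨-, hdfin, hdk⟩, hds⟩ := exists_lt_of_csInf_lt hne (h.trans_lt hts)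
  exact (ncard_le_ncard (fun x hx => hds.trans (hs x hx)) hdfin).trans_lt hdk

theorem lt_kthLargest_iff (hf : VanishesAtInfinity f) {k : ℕ} (hk : k ≠ 0) {t : ℝ}
    (ht : 0 < t) : t < kthLargest f k ↔ k ≤ {x | t < |f x|}.ncard := by
  rw [← not_le, hf.kthLargest_le_iff hk ht, not_lt]

theorem kthLargest_anti (hf : VanishesAtInfinity f) {k k' : ℕ} (hk : k ≠ 0) (hkk' : k ≤ k') :
    kthLargest f k' ≤ kthLargest f k := by
  refine le_of_forall_gt_imp_ge_of_dense fun t ht => ?_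
  have ht0 := (kthLargest_nonneg f k).trans_lt ht
  rw [hf.kthLargest_le_iff (by omega) ht0]
  exact ((hf.kthLargest_le_iff hk ht0).1 ht.le).trans_le hkk'

theorem le_ncard_setOf_kthLargest_le (hf : VanishesAtInfinity f) {k : ℕ} (hk : k ≠ 0)
    (h : 0 < kthLargest f k) : k ≤ {x | kthLargest f k ≤ |f x|}.ncard := by
  set a := kthLargest f k
  have hM : {x | a / 2 < |f x| ∧ |f x| < a}.Finite :=
    (hf _ (half_pos h)).subset fun x hx => hx.1
  -- no value of `|f|` lies just below `a`
  obtain ⟨s, ⟨hs, has⟩, hsa⟩ := ((hM.eventually_all.2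
    fun x hx => eventually_gt_nhds hx.2).and (eventually_gt_nhds (half_lt_self h))
    |>.filter_mono nhdsWithin_le_nhds |>.and self_mem_nhdsWithin).exists
    (f := nhdsWithin a (Iio a))
  have hsets : {x | s < |f x|} = {x | a ≤ |f x|} := by
    ext x
    refine ⟨fun hx => not_lt.1 fun hxa => (hs x ⟨has.trans hx, hxa⟩).not_gt hx,
      fun hx => hsa.trans_le hx⟩
  rw [← hsets, ← hf.lt_kthLargest_iff hk (by linarith)]
  exact hsa

end VanishesAtInfinity

end kthLargest

section Isoperimetry

variable {V : Type*} (G : SimpleGraph V)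

theorem vertexBoundary_finite (hlf : ∀ x, (G.neighborSet x).Finite) {X : Set V}
    (hX : X.Finite) : (vertexBoundary G X).Finite :=
  (hX.biUnion fun x _ => hlf x).subset fun _ ⟨_, _, hx, hadj⟩ => mem_biUnion hx hadj.symm

theorem isoNum_le_ncard_vertexBoundary (hlf : ∀ x, (G.neighborSet x).Finite) {X : Set V}
    (hX : X.Finite) : isoNum G X.ncard ≤ (vertexBoundary G X).ncard :=
  Nat.sInf_le ⟨X, hX, rfl, vertexBoundary_finite G hlf hX, rfl⟩

variable {G}

theorem isoNum_le_isoNum (hmono : ∀ n, 1 ≤ n → isoNum G n ≤ isoNum G (n + 1)) {n n' : ℕ}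
    (hn : n ≠ 0) (hnn' : n ≤ n') : isoNum G n ≤ isoNum G n' := by
  induction n', hnn' using Nat.le_induction with
  | base => rfl
  | succ k hk ih => exact ih.trans (hmono k (by omega))

theorem add_isoNum_le_ncard_add_ncard (hlf : ∀ x, (G.neighborSet x).Finite)
    (hmono : ∀ n, 1 ≤ n → isoNum G n ≤ isoNum G (n + 1)) {A T : Set V} (hT : T.Finite)
    (hAT : A ⊆ T) {n : ℕ} (hn : n ≠ 0) (hnA : n ≤ A.ncard) :
    n + isoNum G n ≤ T.ncard + (vertexBoundary G A \ T).ncard := by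
  have hA : A.Finite := hT.subset hAT
  have hsplit : vertexBoundary G A ⊆ (vertexBoundary G A \ T) ∪ (T \ A) :=
    fun z hz => (em (z ∈ T)).elim (fun hzT => .inr ⟨hzT, hz.1⟩) fun hzT => .inl ⟨hz, hzT⟩
  have hbound := (ncard_le_ncard hsplit
    ((vertexBoundary_finite G hlf hA).sdiff.union hT.sdiff)).trans (ncard_union_le _ _)
  have hiso := (isoNum_le_isoNum hmono hn hnA).trans (isoNum_le_ncard_vertexBoundary G hlf hA)
  have hdiff := ncard_sdiff hAT hA
  have hAT' := ncard_le_ncard hAT hT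
  omega

end Isoperimetry

section ComparisonGraph

variable {V : Type*} {G : SimpleGraph V}

variable (G) in
/-- The children of `n ≥ 1` in `G_c` are the integers in `(lastChild G (n - 1), lastChild G n]`;
`parent G 1 = 0` is a phantom root. -/
def lastChild (n : ℕ) : ℕ := n + isoNum₀ G n

variable (G) in
def parent (i : ℕ) : ℕ := sInf {n | i ≤ lastChild G n}

theorem lastChild_zero : lastChild G 0 = 1 := by
  simp [lastChild, isoNum₀]

theorem lastChild_of_ne_zero {n : ℕ} (hn : n ≠ 0) : lastChild G n = n + isoNum G n := by
  simp [lastChild, isoNum₀, hn]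

theorem le_lastChild (n : ℕ) : n ≤ lastChild G n :=
  Nat.le_add_right _ _

theorem parent_le_self (i : ℕ) : parent G i ≤ i :=
  Nat.sInf_le (le_lastChild i)

theorem monotone_lastChild (hmono : ∀ n, 1 ≤ n → isoNum G n ≤ isoNum G (n + 1)) :
    Monotone (lastChild G) := by
  refine monotone_nat_of_le_succ fun n => ?_
  rcases Nat.eq_zero_or_pos n with rfl | hn
  · simp [lastChild_zero, lastChild_of_ne_zero]
  · rw [lastChild_of_ne_zero hn.ne', lastChild_of_ne_zero (by omega)]
    have := hmono n hn
    omega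

theorem parent_le_iff (hmono : ∀ n, 1 ≤ n → isoNum G n ≤ isoNum G (n + 1)) {i m : ℕ} :
    parent G i ≤ m ↔ i ≤ lastChild G m :=
  ⟨fun h => (Nat.sInf_mem (s := {n | i ≤ lastChild G n}) ⟨i, le_lastChild i⟩).trans
    (monotone_lastChild hmono h), fun h => Nat.sInf_le h⟩

theorem parent_eq_of_cAdj (hmono : ∀ n, 1 ≤ n → isoNum G n ≤ isoNum G (n + 1)) {a b : ℕ+}
    (h : cAdj G a b) : parent G b = a := by
  obtain ⟨-, hlo, hhi⟩ := h
  have hle : parent G b ≤ a := (parent_le_iff hmono).2 (by rwa [lastChild_of_ne_zero a.ne_zero])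
  have hgt : ¬ parent G b ≤ a - 1 := fun h' => ((parent_le_iff hmono).1 h').not_gt hlo
  omega

theorem exists_parent_eq_of_mem_edgeSet (hmono : ∀ n, 1 ≤ n → isoNum G n ≤ isoNum G (n + 1))
    {e : Sym2 ℕ+} (he : e ∈ (comparisonGraph G).edgeSet) :
    ∃ a b : ℕ+, e = s(a, b) ∧ a < b ∧ parent G b = a := by
  induction e using Sym2.ind with
  | _ a b =>
    rcases he with h | h
    · exact ⟨a, b, rfl, h.1, parent_eq_of_cAdj hmono h⟩
    · exact ⟨b, a, Sym2.eq_swap, h.1, parent_eq_of_cAdj hmono h⟩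

theorem gradPPow_comparisonGraph_le (hmono : ∀ n, 1 ≤ n → isoNum G n ≤ isoNum G (n + 1))
    (g : ℕ → ℝ) (p : ℝ) (Φ : ℕ → ℝ≥0∞)
    (hΦ : ∀ i, parent G i ≠ 0 → ENNReal.ofReal (|g (parent G i) - g i| ^ p) ≤ Φ i) :
    gradPPow (comparisonGraph G) (fun k : ℕ+ => g k) p ≤ ∑' i, Φ i := by
  let child (e : (comparisonGraph G).edgeSet) : ℕ := ((e : Sym2 ℕ+).sup : ℕ)
  have hchild_inj : Function.Injective child := by
    rintro ⟨e, he⟩ ⟨e', he'⟩ h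
    obtain ⟨a, b, rfl, hab, hpar⟩ := exists_parent_eq_of_mem_edgeSet hmono he
    obtain ⟨a', b', rfl, hab', hpar'⟩ := exists_parent_eq_of_mem_edgeSet hmono he'
    simp only [child, Sym2.sup_mk, sup_of_le_right hab.le, sup_of_le_right hab'.le] at h
    obtain rfl : b = b' := PNat.coe_injective h
    obtain rfl : a = a' := PNat.coe_injective (hpar.symm.trans hpar')
    rfl
  refine (ENNReal.tsum_le_tsum fun e => ?_).trans (ENNReal.tsum_comp_le_tsum_of_injective
    hchild_inj Φ)
  obtain ⟨e, he⟩ := e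
  obtain ⟨a, b, rfl, hab, hpar⟩ := exists_parent_eq_of_mem_edgeSet hmono he
  have := hΦ b (by rw [hpar]; exact a.ne_zero)
  simpa [child, sup_of_le_right hab.le, hpar] using this

end ComparisonGraph

theorem exists_injective_forall_mem_of_le_ncard {α : Type*} {m M : ℕ} (W : ℕ → Set α)
    (hW : ∀ i ∈ Ioc m M, i - m ≤ (W i).ncard) :
    ∃ w : Ioc m M → α, Function.Injective w ∧ ∀ i : Ioc m M, w i ∈ W i := by
  have hfin (i : Ioc m M) : (W i).Finite :=
    finite_of_ncard_pos ((Nat.sub_pos_of_lt i.2.1).trans_le (hW i i.2))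
  -- Hall's condition: a family of indices with largest element `j` has at most `j - m` members
  obtain ⟨w, hinj, hw⟩ := (Finset.all_card_le_biUnion_card_iff_exists_injective
    fun i => (hfin i).toFinset).1 fun s => by
      rcases s.eq_empty_or_nonempty with rfl | hs
      · simp
      set j := s.max' hs
      calc s.card ≤ (Finset.Ioc m (j : ℕ)).card :=
            Finset.card_le_card_of_injOn Subtype.val
              (fun i hi => Finset.mem_Ioc.2 ⟨i.2.1, s.le_max' i hi⟩) Subtype.val_injective.injOn
        _ = j - m := Nat.card_Ioc _ _
        _ ≤ (W j).ncard := hW j j.2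
        _ = ((hfin j).toFinset).card := ncard_eq_toFinset_card _ _
        _ ≤ (s.biUnion fun i => (hfin i).toFinset).card :=
            Finset.card_le_card
              (Finset.subset_biUnion_of_mem (fun i => (hfin i).toFinset) (s.max'_mem hs))
  exact ⟨w, hinj, fun i => (hfin i).mem_toFinset.1 (hw i)⟩

section LevelSets

variable {V : Type*} {G : SimpleGraph V} {f : V → ℝ}

theorem exists_injective_crossingEdges (hlf : ∀ x, (G.neighborSet x).Finite)
    (hmono : ∀ n, 1 ≤ n → isoNum G n ≤ isoNum G (n + 1)) (hpos : ∀ x, 0 ≤ f x)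
    (hf : VanishesAtInfinity f) {t : ℝ} (ht : 0 < t) {m : ℕ}
    (hm : {x | t < |f x|}.ncard = m) (hm0 : m ≠ 0) :
    ∃ E : Ioc m (lastChild G m) → G.edgeSet, Function.Injective E ∧
      ∀ i, ∃ u w, (E i : Sym2 V) = s(u, w) ∧
        kthLargest f (parent G i) ≤ f u ∧ f w ≤ t := by
  set T := {x | t < |f x|}
  have hT : T.Finite := hf t ht
  have hpar (i : ℕ) (hi : i ∈ Ioc m (lastChild G m)) :
      parent G i ≠ 0 ∧ t < kthLargest f (parent G i) := by
    have hp0 : parent G i ≠ 0 := fun h =>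
      ((parent_le_iff hmono).1 h.le).not_gt (by rw [lastChild_zero]; have := hi.1; omega)
    exact ⟨hp0, (hf.lt_kthLargest_iff hp0 ht).2 (hm ▸ (parent_le_iff hmono).2 hi.2)⟩
  have hAT (i : ℕ) (hi : i ∈ Ioc m (lastChild G m)) :
      {x | kthLargest f (parent G i) ≤ |f x|} ⊆ T := fun _ hx => (hpar i hi).2.trans_le hx
  obtain ⟨w, hw_inj, hw⟩ := exists_injective_forall_mem_of_le_ncard
    (fun i => vertexBoundary G {x | kthLargest f (parent G i) ≤ |f x|} \ T) fun i hi => by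
      obtain ⟨hp0, htp⟩ := hpar i hi
      have hcount := add_isoNum_le_ncard_add_ncard hlf hmono hT (hAT i hi) hp0
        (hf.le_ncard_setOf_kthLargest_le hp0 (ht.trans htp))
      have hchild : i ≤ lastChild G (parent G i) := (parent_le_iff hmono).1 le_rfl
      rw [lastChild_of_ne_zero hp0] at hchild
      omega
  choose u hu hadj using fun i => (hw i).1.2
  refine ⟨fun i => ⟨s(u i, w i), (hadj i).symm⟩, fun i j hij => hw_inj ?_,
    fun i => ⟨u i, w i, rfl, ?_, ?_⟩⟩
  · -- an edge crossing the level has exactly one endpoint above it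
    rcases Sym2.eq_iff.1 (congrArg Subtype.val hij) with ⟨-, h⟩ | ⟨h, -⟩
    · exact h
    · exact absurd (h ▸ hAT i i.2 (hu i)) (hw j).2
  · simpa [abs_of_nonneg (hpos _)] using hu i
  · exact (le_abs_self _).trans (not_lt.1 (hw i).2)

theorem mem_Ioc_of_layerDensity_ne_zero (hmono : ∀ n, 1 ≤ n → isoNum G n ≤ isoNum G (n + 1))
    (hf : VanishesAtInfinity f) {p t : ℝ} (ht : 0 < t) {i : ℕ}
    (h : layerDensity p (kthLargest f (parent G i)) (kthLargest f i) t ≠ 0) :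
    parent G i ≠ 0 ∧ i ∈ Ioc {x | t < |f x|}.ncard (lastChild G {x | t < |f x|}.ncard) := by
  obtain ⟨hit, htp⟩ := mem_of_indicator_ne_zero h
  have hp0 : parent G i ≠ 0 := fun h => by
    rw [h, kthLargest_zero] at htp
    exact ht.not_gt htp
  have hi0 : i ≠ 0 := fun h => hp0 (Nat.eq_zero_of_le_zero (h ▸ parent_le_self i))
  exact ⟨hp0, (hf.kthLargest_le_iff hi0 ht).1 hit,
    (parent_le_iff hmono).1 ((hf.lt_kthLargest_iff hp0 ht).1 htp)⟩

theorem tsum_layerDensity_kthLargest_le (hlf : ∀ x, (G.neighborSet x).Finite)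
    (hmono : ∀ n, 1 ≤ n → isoNum G n ≤ isoNum G (n + 1)) (hpos : ∀ x, 0 ≤ f x)
    (hf : VanishesAtInfinity f) {p : ℝ} (hp : 1 ≤ p) {t : ℝ} (ht : t ≠ 0) :
    ∑' i, layerDensity p (kthLargest f (parent G i)) (kthLargest f i) t ≤
      ∑' e : G.edgeSet, layerDensity p ((e : Sym2 V).map f).sup ((e : Sym2 V).map f).inf t := by
  rcases ht.lt_or_gt with ht | ht
  · exact (ENNReal.tsum_eq_zero.2 fun i => indicator_of_notMem
      (fun h => (h.1.trans_lt ht).not_ge (kthLargest_nonneg f i)) _).trans_le bot_le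
  set m := {x | t < |f x|}.ncard with hm
  rcases eq_or_ne m 0 with hm0 | hm0
  · refine (ENNReal.tsum_eq_zero.2 fun i => ?_).trans_le bot_le
    by_contra hi
    obtain ⟨hp0, -, hle⟩ := mem_Ioc_of_layerDensity_ne_zero hmono hf ht hi
    exact hp0 (Nat.eq_zero_of_le_zero (hm0 ▸ (parent_le_iff hmono).2 hle))
  obtain ⟨E, hE, hEprop⟩ := exists_injective_crossingEdges hlf hmono hpos hf ht hm.symm hm0
  calc ∑' i, layerDensity p (kthLargest f (parent G i)) (kthLargest f i) t
      = ∑' i : Ioc m (lastChild G m),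
          layerDensity p (kthLargest f (parent G i)) (kthLargest f i) t :=
        (tsum_subtype_eq_of_support_subset fun _ hi =>
          (mem_Ioc_of_layerDensity_ne_zero hmono hf ht hi).2).symm
    _ ≤ ∑' i : Ioc m (lastChild G m),
          layerDensity p ((E i : Sym2 V).map f).sup ((E i : Sym2 V).map f).inf t :=
        ENNReal.tsum_le_tsum fun i => by
          obtain ⟨u, w, he, hu, hw⟩ := hEprop i
          rw [he, Sym2.map_mk, Sym2.sup_mk, Sym2.inf_mk]
          exact layerDensity_le_layerDensity hp (inf_le_right.trans hw) (hu.trans le_sup_left)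
    _ ≤ _ := ENNReal.tsum_comp_le_tsum_of_injective hE
          fun e : G.edgeSet => layerDensity p ((e : Sym2 V).map f).sup ((e : Sym2 V).map f).inf t

end LevelSets

theorem gradPPow_eq_lintegral_tsum {V : Type*} [Countable V] (G : SimpleGraph V) (f : V → ℝ)
    {p : ℝ} (hp : 1 ≤ p) : gradPPow G f p = ∫⁻ t, ∑' e : G.edgeSet,
      layerDensity p ((e : Sym2 V).map f).sup ((e : Sym2 V).map f).inf t := by
  rw [lintegral_tsum fun _ => (measurable_layerDensity _ _ _).aemeasurable, gradPPow]
  refine tsum_congr fun ⟨e, _⟩ => ?_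
  induction e using Sym2.ind with
  | _ x y =>
    rw [Sym2.lift_mk, Sym2.map_mk, Sym2.sup_mk, Sym2.inf_mk, lintegral_layerDensity hp inf_le_sup]
    simp [max_sub_min_eq_abs']

theorem comparison_lemma_general {V : Type*} [Countable V]
    (G : SimpleGraph V)
    (hlf : ∀ x : V, (G.neighborSet x).Finite)
    (hmono : ∀ n : ℕ, 1 ≤ n → isoNum G n ≤ isoNum G (n + 1))
    (f : V → ℝ) (hpos : ∀ x, 0 ≤ f x) (hf : VanishesAtInfinity f)
    (p : ℝ) (hp : 1 ≤ p) :
    gradPPow (comparisonGraph G) (fun k : ℕ+ => kthLargest f (k : ℕ)) p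
      ≤ gradPPow G f p := by
  calc gradPPow (comparisonGraph G) (fun k : ℕ+ => kthLargest f (k : ℕ)) p
      ≤ ∑' i, ∫⁻ t, layerDensity p (kthLargest f (parent G i)) (kthLargest f i) t :=
        gradPPow_comparisonGraph_le hmono _ p _ fun i hi => by
          have hanti := hf.kthLargest_anti hi (parent_le_self i)
          rw [lintegral_layerDensity hp hanti, abs_of_nonneg (sub_nonneg.2 hanti)]
    _ = ∫⁻ t, ∑' i, layerDensity p (kthLargest f (parent G i)) (kthLargest f i) t :=
        (lintegral_tsum fun _ => (measurable_layerDensity _ _ _).aemeasurable).symm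
    _ ≤ ∫⁻ t, ∑' e : G.edgeSet,
          layerDensity p ((e : Sym2 V).map f).sup ((e : Sym2 V).map f).inf t :=
        lintegral_mono_ae <| (Measure.ae_ne volume 0).mono fun _ ht =>
          tsum_layerDensity_kthLargest_le hlf hmono hpos hf hp ht
    _ = gradPPow G f p := (gradPPow_eq_lintegral_tsum G f hp).symm

/-- **Comparison Lemma.**  Let `G` be a connected graph with countably infinite vertex
set, all of whose vertices have finite degree, and whose isoperimetric numbers satisfy
`∂_V^{n+1} ≥ ∂_V^n` for all `n ≥ 1`.  Let `f : V → ℝ_{≥0}` vanish at infinity and let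
`f_c (k) = k`-th largest value of `f` be its comparison function on the universal
comparison graph `G_c`.  Then for every `p ≥ 1`,
`Σ_{(x,y) ∈ E_c} |f_c x - f_c y|^p ≤ Σ_{(x,y) ∈ E} |f x - f y|^p`. -/
theorem comparison_lemma {V : Type*} [Countable V] [Infinite V]
    (G : SimpleGraph V) (hconn : G.Connected)
    (hlf : ∀ x : V, (G.neighborSet x).Finite)
    (hmono : ∀ n : ℕ, 1 ≤ n → isoNum G n ≤ isoNum G (n + 1))
    (f : V → ℝ) (hpos : ∀ x, 0 ≤ f x) (hf : VanishesAtInfinity f)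
    (p : ℝ) (hp : 1 ≤ p) :
    gradPPow (comparisonGraph G) (fun k : ℕ+ => kthLargest f (k : ℕ)) p
      ≤ gradPPow G f p :=
  comparison_lemma_general G hlf hmono f hpos hf p hp
end
end

section
/- (Modified Coarea Formula) Let G = (V,E) be a graph in which every vertex has finite degree, let f : V → ℝ_{≥0} vanish at infinity, and let 1 ≤ p < ∞. Then Σ_{x∼y} |f(x) − f(y)|^p = p · ∫_0^∞ Σ_{(x,y) ∈ ∂_E{f ≥ s}} |min(f(x), s) − min(f(y), s)|^{p−1} ds, where ∂_E{f ≥ s} denotes the set of edges of G having exactly one endpoint in {v ∈ V : f(v) ≥ s} (for p = 1 the integrand counts the edges of the cut). -/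
open scoped ENNReal Classical

noncomputable section

/-- The contribution of an edge to the cut `∂_E{f ≥ s}`:  the value
`|min(f x, s) - min(f y, s)|^{p-1}` if the edge has exactly one endpoint in
`{v : f v ≥ s}`, and `0` otherwise. -/
def cutVal {V : Type*} (f : V → ℝ) (p s : ℝ) : Sym2 V → ℝ≥0∞ :=
  Sym2.lift
    ⟨fun x y =>
      if (s ≤ f x ∧ f y < s) ∨ (s ≤ f y ∧ f x < s)
      then ENNReal.ofReal (|min (f x) s - min (f y) s| ^ (p - 1))
      else 0,
    fun x y => by
      dsimp only
      rw [abs_sub_comm (min (f x) s) (min (f y) s)]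
      exact if_congr or_comm rfl rfl⟩

/-! For `0 ≤ f y ≤ f x`, the edge `{x, y}` lies in the cut `∂_E{f ≥ s}` exactly when
`s ∈ (f y, f x]`, with weight `(s - f y)^(p-1)`, and `p ∫_{f y}^{f x} (s - f y)^(p-1) ds` is
`(f x - f y)^p`. It remains to exchange the sum over edges with the integral, which needs no
countability: either the sum of the integrals is infinite, or only countably many edges have
nonzero integral, and an edge with zero integral has `f x = f y`, so it lies in no cut. -/

open MeasureTheory Set

section TsumLintegral

variable {α ι : Type*} [MeasurableSpace α] {μ : Measure α}

theorem tsum_lintegral_le_lintegral_tsum {g : ι → α → ℝ≥0∞}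
    (hg : ∀ i, AEMeasurable (g i) μ) :
    ∑' i, ∫⁻ a, g i a ∂μ ≤ ∫⁻ a, ∑' i, g i a ∂μ := by
  rw [ENNReal.tsum_eq_iSup_sum]
  refine iSup_le fun s => ?_
  rw [← lintegral_finsetSum' s fun i _ => hg i]
  exact lintegral_mono fun a => ENNReal.sum_le_tsum s

theorem lintegral_tsum_of_lintegral_eq_zero {g : ι → α → ℝ≥0∞}
    (hg : ∀ i, AEMeasurable (g i) μ) (hzero : ∀ i, ∫⁻ a, g i a ∂μ = 0 → g i = 0) :
    ∫⁻ a, ∑' i, g i a ∂μ = ∑' i, ∫⁻ a, g i a ∂μ := by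
  by_cases htop : ∑' i, ∫⁻ a, g i a ∂μ = ∞
  · exact le_antisymm (htop ▸ le_top) (tsum_lintegral_le_lintegral_tsum hg)
  set S := Function.support fun i => ∫⁻ a, g i a ∂μ
  have : Countable S := (Summable.countable_support_ennreal htop).to_subtype
  have hsupp : ∀ a, Function.support (fun i => g i a) ⊆ S := fun a i hi hS =>
    hi (congrFun (hzero i (by simpa [S] using hS)) a)
  calc ∫⁻ a, ∑' i, g i a ∂μ = ∫⁻ a, ∑' i : S, g i a ∂μ :=
        lintegral_congr fun a => (tsum_subtype_eq_of_support_subset (hsupp a)).symm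
    _ = ∑' i : S, ∫⁻ a, g i a ∂μ := lintegral_tsum fun i => hg i
    _ = ∑' i, ∫⁻ a, g i a ∂μ := tsum_subtype_support _

end TsumLintegral

theorem lintegral_Ioc_sub_rpow {a b p : ℝ} (hp : 0 < p) (hab : a ≤ b) :
    ∫⁻ t in Ioc a b, ENNReal.ofReal ((t - a) ^ (p - 1)) = ENNReal.ofReal ((b - a) ^ p / p) := by
  have hint : IntervalIntegrable (fun t : ℝ => (t - a) ^ (p - 1)) volume a b := by
    simpa using (intervalIntegral.intervalIntegrable_rpow' (r := p - 1) (by linarith)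
      (a := 0) (b := b - a)).comp_sub_right a
  rw [← ofReal_integral_eq_lintegral_ofReal
    ((intervalIntegrable_iff_integrableOn_Ioc_of_le hab).mp hint)
    ((ae_restrict_iff' measurableSet_Ioc).mpr
      (ae_of_all _ fun t ht => Real.rpow_nonneg (by linarith [ht.1]) _)),
    ← intervalIntegral.integral_of_le hab,
    intervalIntegral.integral_comp_sub_right (fun u => u ^ (p - 1)) a,
    integral_rpow (Or.inl (by linarith)), sub_self, sub_add_cancel, Real.zero_rpow hp.ne',
    sub_zero]

section CutVal

variable {V : Type*} (f : V → ℝ) (p : ℝ)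

theorem measurable_cutVal (z : Sym2 V) : Measurable fun t : ℝ => cutVal f p t z := by
  induction z using Sym2.ind with
  | _ x y =>
    have hcut : MeasurableSet {t : ℝ | (t ≤ f x ∧ f y < t) ∨ (t ≤ f y ∧ f x < t)} := by
      have : {t : ℝ | (t ≤ f x ∧ f y < t) ∨ (t ≤ f y ∧ f x < t)}
          = Ioc (f y) (f x) ∪ Ioc (f x) (f y) := by
        ext t; simp only [mem_ofPred_eq, mem_union, mem_Ioc]; tauto
      exact this ▸ measurableSet_Ioc.union measurableSet_Ioc
    exact Measurable.ite hcut (by fun_prop) measurable_const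

theorem cutVal_mk_of_le {x y : V} (hyx : f y ≤ f x) (t : ℝ) :
    cutVal f p t s(x, y) =
      (Ioc (f y) (f x)).indicator (fun t => ENNReal.ofReal ((t - f y) ^ (p - 1))) t := by
  simp only [cutVal, Sym2.lift_mk]
  by_cases ht : t ∈ Ioc (f y) (f x)
  · rw [indicator_of_mem ht, if_pos (Or.inl ⟨ht.2, ht.1⟩), min_eq_right ht.2,
      min_eq_left ht.1.le, abs_of_nonneg (by linarith [ht.1])]
  · rw [indicator_of_notMem ht, if_neg]
    rintro (⟨h₁, h₂⟩ | ⟨h₁, h₂⟩)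
    · exact ht ⟨h₂, h₁⟩
    · linarith

theorem cutVal_mk_of_eq {x y : V} (hxy : f x = f y) (t : ℝ) : cutVal f p t s(x, y) = 0 := by
  rw [cutVal_mk_of_le f p hxy.ge, hxy, Ioc_self, indicator_empty]

variable {f p}

theorem lintegral_cutVal_mk_of_le {x y : V} (hy : 0 ≤ f y) (hyx : f y ≤ f x) (hp : 0 < p) :
    ∫⁻ t in Ioi 0, cutVal f p t s(x, y) = ENNReal.ofReal ((f x - f y) ^ p / p) := by
  simp_rw [cutVal_mk_of_le f p hyx]
  rw [lintegral_indicator measurableSet_Ioc, Measure.restrict_restrict measurableSet_Ioc,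
    inter_eq_self_of_subset_left (Ioc_subset_Ioi_self.trans (Ioi_subset_Ioi hy))]
  exact lintegral_Ioc_sub_rpow hp hyx

theorem ofReal_mul_lintegral_cutVal_mk {x y : V} (hx : 0 ≤ f x) (hy : 0 ≤ f y) (hp : 0 < p) :
    ENNReal.ofReal p * ∫⁻ t in Ioi 0, cutVal f p t s(x, y) =
      ENNReal.ofReal (|f x - f y| ^ p) := by
  wlog hyx : f y ≤ f x generalizing x y
  · rw [Sym2.eq_swap, abs_sub_comm]
    exact this hy hx (le_of_not_ge hyx)
  rw [lintegral_cutVal_mk_of_le hy hyx hp, ← ENNReal.ofReal_mul hp.le,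
    abs_of_nonneg (sub_nonneg.mpr hyx), mul_div_cancel₀ _ hp.ne']

theorem cutVal_eq_zero_of_lintegral_eq_zero (hf : ∀ x, 0 ≤ f x) (hp : 0 < p) {z : Sym2 V}
    (hz : ∫⁻ t in Ioi 0, cutVal f p t z = 0) : (fun t => cutVal f p t z) = 0 := by
  induction z using Sym2.ind with
  | _ x y =>
    have hpow : ENNReal.ofReal (|f x - f y| ^ p) = 0 := by
      rw [← ofReal_mul_lintegral_cutVal_mk (hf x) (hf y) hp, hz, mul_zero]
    rw [ENNReal.ofReal_eq_zero, (Real.rpow_nonneg (abs_nonneg _) p).ge_iff_eq',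
      Real.rpow_eq_zero (abs_nonneg _) hp.ne', abs_eq_zero, sub_eq_zero] at hpow
    exact funext (cutVal_mk_of_eq f p hpow)

theorem gradPPow_eq_tsum_lintegral_cutVal (G : SimpleGraph V) (hf : ∀ x, 0 ≤ f x) (hp : 0 < p) :
    gradPPow G f p = ∑' e : G.edgeSet, ENNReal.ofReal p * ∫⁻ t in Ioi 0, cutVal f p t e := by
  refine tsum_congr fun ⟨z, _⟩ => ?_
  induction z using Sym2.ind with
  | _ x y => exact (ofReal_mul_lintegral_cutVal_mk (hf x) (hf y) hp).symm

end CutVal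

theorem modified_coarea_formula_general {V : Type*} (G : SimpleGraph V)
    (f : V → ℝ) (hpos : ∀ x, 0 ≤ f x)
    (p : ℝ) (hp : 1 ≤ p) :
    gradPPow G f p
      = ENNReal.ofReal p *
          ∫⁻ s in Set.Ioi (0 : ℝ), ∑' e : G.edgeSet, cutVal f p s (e : Sym2 V) := by
  have hp₀ : 0 < p := zero_lt_one.trans_le hp
  rw [gradPPow_eq_tsum_lintegral_cutVal G hpos hp₀, ENNReal.tsum_mul_left,
    lintegral_tsum_of_lintegral_eq_zero (g := fun (e : G.edgeSet) t => cutVal f p t e)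
      (fun e => (measurable_cutVal f p e).aemeasurable)
      fun e => cutVal_eq_zero_of_lintegral_eq_zero hpos hp₀]

/-- **Modified Coarea Formula.**  Let `G` be a graph all of whose vertices have finite
degree, let `f : V → ℝ_{≥0}` vanish at infinity and let `1 ≤ p < ∞`.  Then
`Σ_{x∼y} |f x - f y|^p
  = p · ∫_0^∞ Σ_{(x,y) ∈ ∂_E{f ≥ s}} |min(f x, s) - min(f y, s)|^{p-1} ds`
(for `p = 1` the integrand counts the edges of the cut). -/
theorem modified_coarea_formula {V : Type*} (G : SimpleGraph V)
    (hlf : ∀ x : V, (G.neighborSet x).Finite)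
    (f : V → ℝ) (hpos : ∀ x, 0 ≤ f x) (hf : VanishesAtInfinity f)
    (p : ℝ) (hp : 1 ≤ p) :
    gradPPow G f p
      = ENNReal.ofReal p *
          ∫⁻ s in Set.Ioi (0 : ℝ), ∑' e : G.edgeSet, cutVal f p s (e : Sym2 V) :=
  modified_coarea_formula_general G f hpos p hp
end
end

section
/- Let ∂_V^n be the isoperimetric number of the lattice graph (ℤ², ℓ¹). Then ∂_V^{n+1} ≥ ∂_V^n for all n ≥ 1, and for every integer k ≥ 0, if n = 2k(k+1) + 1 then ∂_V^n = 4k + 4. -/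
open scoped ENNReal Classical

noncomputable section

/-!
Cut a finite `X ⊆ ℤ²` into its diagonals `x + y = c`. The two unit steps lowering `x + y` carry
a nonempty diagonal slice `L` of `X` onto at least `|L| + 1` points of the next diagonal
(Cauchy–Davenport), each of which lies in `X` or in `∂X`; likewise upwards. Telescoping these
inequalities outwards from the fullest slice, of size `A`, gives `|∂X| ≥ 2A + s + 1` where `s` is
the number of occupied diagonals, while `|X| ≤ A s`; hence `8 |X| ≤ (|∂X| - 1)²`. For
`|X| = 2k(k+1) + 1` this forces `|∂X| ≥ 4k + 4`, which the `ℓ¹`-ball of radius `k` attains.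
Monotonicity: deleting from an optimal set the point `p` maximising `(x + y, x)` lexicographically
removes `p + (1, 0)` from the boundary and adds at most `p`.
-/

open Finset
open scoped Pointwise

section VertexBoundary

variable {V : Type*} {G : SimpleGraph V}

theorem isoNum_le_ncard {X : Set V} (hX : X.Finite) (hbd : (vertexBoundary G X).Finite) :
    isoNum G X.ncard ≤ (vertexBoundary G X).ncard := by
  rw [isoNum]
  exact Nat.sInf_le ⟨X, hX, rfl, hbd, rfl⟩

theorem exists_ncard_vertexBoundary_eq_isoNum {n : ℕ}
    (h : ∃ X : Set V, X.Finite ∧ X.ncard = n ∧ (vertexBoundary G X).Finite) :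
    ∃ X : Set V, X.Finite ∧ X.ncard = n ∧ (vertexBoundary G X).Finite ∧
      (vertexBoundary G X).ncard = isoNum G n := by
  obtain ⟨X, hX, hn, hbd⟩ := h
  rw [isoNum]
  exact Nat.sInf_mem (s := {m | ∃ X : Set V, X.Finite ∧ X.ncard = n ∧
    (vertexBoundary G X).Finite ∧ (vertexBoundary G X).ncard = m}) ⟨_, X, hX, hn, hbd, rfl⟩

theorem vertexBoundary_diff_singleton_subset {X : Set V} {p z : V}
    (hz : ∀ x ∈ X, G.Adj z x → x = p) :
    vertexBoundary G (X \ {p}) ⊆ insert p (vertexBoundary G X \ {z}) := by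
  rintro w ⟨hw, x, ⟨hxX, hxp⟩, hwx⟩
  by_cases hwp : w = p
  · exact .inl hwp
  refine .inr ⟨⟨fun hwX => hw ⟨hwX, hwp⟩, x, hxX, hwx⟩, ?_⟩
  rintro rfl
  exact hxp (hz x hxX hwx)

theorem ncard_vertexBoundary_diff_singleton_le {X : Set V} {p z : V}
    (hbd : (vertexBoundary G X).Finite) (hzX : z ∈ vertexBoundary G X)
    (hz : ∀ x ∈ X, G.Adj z x → x = p) :
    (vertexBoundary G (X \ {p})).ncard ≤ (vertexBoundary G X).ncard :=
  calc (vertexBoundary G (X \ {p})).ncard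
      ≤ (insert p (vertexBoundary G X \ {z})).ncard :=
        Set.ncard_le_ncard (vertexBoundary_diff_singleton_subset hz) ((hbd.sdiff).insert p)
    _ ≤ (vertexBoundary G X \ {z}).ncard + 1 := Set.ncard_insert_le _ _
    _ = (vertexBoundary G X).ncard := Set.ncard_sdiff_singleton_add_one hzX hbd

end VertexBoundary

section LevelSets

variable {α : Type*} {X B : Finset α} {φ : α → ℤ}

theorem card_filter_lt_add_one (s : Finset α) (m : ℤ) :
    #{x ∈ s | φ x < m + 1} = #{x ∈ s | φ x < m} + #{x ∈ s | φ x = m} := by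
  rw [← card_union_of_disjoint (disjoint_filter.2 fun x _ h1 h2 => by omega), ← filter_or]
  exact congrArg card (filter_congr fun x _ => by omega)

theorem card_fiber_add_card_image_le_card_filter_lt
    (hstep : ∀ c, {x ∈ X | φ x = c + 1}.Nonempty →
      #{x ∈ X | φ x = c + 1} + 1 ≤ #{x ∈ X | φ x = c} + #{x ∈ B | φ x = c})
    (m : ℤ) : #{x ∈ X | φ x = m} + #({x ∈ X | φ x ≤ m}.image φ) ≤ #{x ∈ B | φ x < m} := by
  obtain ⟨b, hb⟩ := (X.image φ).bddBelow
  obtain ⟨a, ham, hlt⟩ : ∃ a ≤ m, ∀ x ∈ X, a < φ x := ⟨min m (b - 1), min_le_left _ _,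
    fun x hx => (min_le_right _ _).trans_lt (by linarith [hb (mem_coe.2 (mem_image_of_mem φ hx))])⟩
  induction m, ham using Int.leInduction with
  | base =>
    rw [filter_false_of_mem fun x hx => (hlt x hx).ne',
      filter_false_of_mem fun x hx => not_le.2 (hlt x hx)]
    simp
  | succ m _ ih =>
    rw [card_filter_lt_add_one]
    rcases {x ∈ X | φ x = m + 1}.eq_empty_or_nonempty with hempty | hne
    · have hle : {x ∈ X | φ x ≤ m + 1} = {x ∈ X | φ x ≤ m} := by
        refine filter_congr fun x hx => ⟨fun h => ?_, fun h => by omega⟩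
        have := (filter_eq_empty_iff.1 hempty) hx
        omega
      rw [hempty, hle, card_empty]
      omega
    · have himage : {x ∈ X | φ x ≤ m + 1}.image φ ⊆ insert (m + 1) ({x ∈ X | φ x ≤ m}.image φ) := by
        intro c
        simp only [mem_image, mem_filter, mem_insert]
        rintro ⟨x, ⟨hx, hle⟩, rfl⟩
        rcases hle.lt_or_eq with h | h
        · exact .inr ⟨x, ⟨hx, by omega⟩, rfl⟩
        · exact .inl h
      have := (card_le_card himage).trans (card_insert_le _ _)
      have := hstep m hne
      omega

theorem two_mul_card_fiber_add_card_image_lt_card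
    (hdown : ∀ c, {x ∈ X | φ x = c + 1}.Nonempty →
      #{x ∈ X | φ x = c + 1} + 1 ≤ #{x ∈ X | φ x = c} + #{x ∈ B | φ x = c})
    (hup : ∀ c, {x ∈ X | φ x = c}.Nonempty →
      #{x ∈ X | φ x = c} + 1 ≤ #{x ∈ X | φ x = c + 1} + #{x ∈ B | φ x = c + 1})
    {m : ℤ} (hm : m ∈ X.image φ) : 2 * #{x ∈ X | φ x = m} + #(X.image φ) < #B := by
  have hlow := card_fiber_add_card_image_le_card_filter_lt hdown m
  have hhigh := card_fiber_add_card_image_le_card_filter_lt (φ := fun x => -φ x) (B := B)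
    (fun c hc => by
      have h := hup (-(c + 1)) (by simpa only [neg_eq_iff_eq_neg] using hc)
      simpa only [neg_eq_iff_eq_neg, neg_add_rev, neg_add_cancel_comm] using h) (-m)
  simp only [neg_inj, neg_le_neg_iff, neg_lt_neg_iff] at hhigh
  have hneg : #({x ∈ X | m ≤ φ x}.image fun x => -φ x) = #({x ∈ X | m ≤ φ x}.image φ) := by
    rw [show (fun x => -φ x) = Neg.neg ∘ φ from rfl, ← image_image,
      card_image_of_injective _ neg_injective]
  rw [hneg] at hhigh
  have hlevels : #(X.image φ) + 1 ≤
      #({x ∈ X | φ x ≤ m}.image φ) + #({x ∈ X | m ≤ φ x}.image φ) := by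
    rw [← card_union_add_card_inter, ← card_singleton m]
    obtain ⟨y, hy, rfl⟩ := mem_image.1 hm
    refine add_le_add (card_le_card fun c hc => ?_) (card_le_card ?_)
    · obtain ⟨x, hx, rfl⟩ := mem_image.1 hc
      rcases le_total (φ x) (φ y) with h | h
      · exact mem_union_left _ (mem_image_of_mem φ (mem_filter.2 ⟨hx, h⟩))
      · exact mem_union_right _ (mem_image_of_mem φ (mem_filter.2 ⟨hx, h⟩))
    · rw [singleton_subset_iff, mem_inter]
      exact ⟨mem_image_of_mem φ (mem_filter.2 ⟨hy, le_rfl⟩),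
        mem_image_of_mem φ (mem_filter.2 ⟨hy, le_rfl⟩)⟩
  have hB : #{x ∈ B | φ x < m} + #{x ∈ B | m < φ x} ≤ #B := by
    rw [← card_union_of_disjoint (disjoint_filter.2 fun x _ h1 h2 => by omega)]
    exact card_le_card (union_subset (filter_subset _ _) (filter_subset _ _))
  omega

theorem eight_mul_card_le_sq
    (hdown : ∀ c, {x ∈ X | φ x = c + 1}.Nonempty →
      #{x ∈ X | φ x = c + 1} + 1 ≤ #{x ∈ X | φ x = c} + #{x ∈ B | φ x = c})
    (hup : ∀ c, {x ∈ X | φ x = c}.Nonempty →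
      #{x ∈ X | φ x = c} + 1 ≤ #{x ∈ X | φ x = c + 1} + #{x ∈ B | φ x = c + 1})
    (hX : X.Nonempty) : 8 * #X ≤ (#B - 1) ^ 2 := by
  obtain ⟨m, hm, hmax⟩ := exists_max_image (X.image φ) (fun c => #{x ∈ X | φ x = c}) (hX.image φ)
  have hcard := card_le_mul_card_image X _ hmax
  have hB := two_mul_card_fiber_add_card_image_lt_card hdown hup hm
  set A := #{x ∈ X | φ x = m}
  set s := #(X.image φ)
  calc 8 * #X ≤ 8 * (A * s) := by gcongr
    _ ≤ (2 * A + s) ^ 2 := by nlinarith [sq_nonneg ((2 * A : ℤ) - s)]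
    _ ≤ (#B - 1) ^ 2 := by gcongr; omega

end LevelSets

section Lattice

theorem latticeZ2_adj_add_left {p w : ℤ × ℤ} : latticeZ2.Adj (p + w) p ↔ l1 w = 1 := by
  show |p.1 + w.1 - p.1| + |p.2 + w.2 - p.2| = 1 ↔ _
  simp [l1]

theorem finite_vertexBoundary_latticeZ2 {X : Set (ℤ × ℤ)} (hX : X.Finite) :
    (vertexBoundary latticeZ2 X).Finite := by
  have hunit : {w : ℤ × ℤ | l1 w = 1}.Finite :=
    (Set.finite_Icc ((-1 : ℤ), (-1 : ℤ)) (1, 1)).subset fun w hw => by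
      change |w.1| + |w.2| = 1 at hw
      rw [Int.abs_eq_natAbs, Int.abs_eq_natAbs] at hw
      simp only [Set.mem_Icc, Prod.le_def]
      omega
  refine (hX.add hunit).subset ?_
  rintro z ⟨-, x, hx, hzx⟩
  refine ⟨x, hx, z - x, ?_, add_sub_cancel x z⟩
  exact latticeZ2_adj_add_left.1 (by rwa [add_sub_cancel])

theorem exists_isoNum_latticeZ2 (n : ℕ) :
    ∃ X : Set (ℤ × ℤ), X.Finite ∧ X.ncard = n ∧ (vertexBoundary latticeZ2 X).Finite ∧
      (vertexBoundary latticeZ2 X).ncard = isoNum latticeZ2 n := by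
  obtain ⟨X, -, hX, hn⟩ := (Set.infinite_univ (α := ℤ × ℤ)).exists_subset_ncard_eq n
  exact exists_ncard_vertexBoundary_eq_isoNum ⟨X, hX, hn, finite_vertexBoundary_latticeZ2 hX⟩

theorem exists_mem_vertexBoundary_latticeZ2_forall_adj_eq {X : Set (ℤ × ℤ)} (hX : X.Finite)
    (hne : X.Nonempty) :
    ∃ p ∈ X, ∃ z ∈ vertexBoundary latticeZ2 X, ∀ x ∈ X, latticeZ2.Adj z x → x = p := by
  obtain ⟨p, hp, hmax⟩ := X.exists_max_image (fun q => toLex (q.1 + q.2, q.1)) hX hne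
  have hle : ∀ x ∈ X, x.1 + x.2 < p.1 + p.2 ∨ x.1 + x.2 = p.1 + p.2 ∧ x.1 ≤ p.1 :=
    fun x hx => Prod.Lex.toLex_le_toLex.1 (hmax x hx)
  have hzX : (p.1 + 1, p.2) ∉ X := fun h => by have := hle _ h; omega
  refine ⟨p, hp, (p.1 + 1, p.2), ⟨hzX, p, hp, by simp [latticeZ2]⟩, fun x hx hadj => ?_⟩
  have hadj : |p.1 + 1 - x.1| + |p.2 - x.2| = 1 := hadj
  rw [Int.abs_eq_natAbs, Int.abs_eq_natAbs] at hadj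
  have := hle x hx
  exact Prod.ext (by omega) (by omega)

theorem monotone_isoNum_latticeZ2 : Monotone (isoNum latticeZ2) := by
  refine monotone_nat_of_le_succ fun n => ?_
  obtain ⟨Y, hY, hcard, hbd, hiso⟩ := exists_isoNum_latticeZ2 (n + 1)
  obtain ⟨p, hp, z, hz, hzp⟩ :=
    exists_mem_vertexBoundary_latticeZ2_forall_adj_eq hY (Set.nonempty_of_ncard_ne_zero (by omega))
  have hcard' : (Y \ {p}).ncard = n := by
    rw [Set.ncard_sdiff_singleton_of_mem hp, hcard, Nat.add_sub_cancel]
  calc isoNum latticeZ2 n = isoNum latticeZ2 (Y \ {p}).ncard := by rw [hcard']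
    _ ≤ (vertexBoundary latticeZ2 (Y \ {p})).ncard :=
      isoNum_le_ncard hY.sdiff (finite_vertexBoundary_latticeZ2 hY.sdiff)
    _ ≤ (vertexBoundary latticeZ2 Y).ncard := ncard_vertexBoundary_diff_singleton_le hbd hz hzp
    _ = isoNum latticeZ2 (n + 1) := hiso

theorem card_diag_add_one_le {X B : Finset (ℤ × ℤ)}
    (hB : vertexBoundary latticeZ2 ↑X ⊆ ↑B) {c d : ℤ} (hne : {p ∈ X | p.1 + p.2 = c}.Nonempty)
    {u v : ℤ × ℤ} (huv : u ≠ v) (hu : l1 u = 1) (hv : l1 v = 1) (hud : u.1 + u.2 = d)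
    (hvd : v.1 + v.2 = d) :
    #{p ∈ X | p.1 + p.2 = c} + 1 ≤ #{p ∈ X | p.1 + p.2 = c + d} + #{p ∈ B | p.1 + p.2 = c + d} := by
  have hsub : {p ∈ X | p.1 + p.2 = c} + {u, v} ⊆ {p ∈ X ∪ B | p.1 + p.2 = c + d} := by
    intro q hq
    obtain ⟨p, hp, w, hw, rfl⟩ := mem_add.1 hq
    obtain ⟨hpX, hpc⟩ := mem_filter.1 hp
    obtain ⟨hw1, hwd⟩ : l1 w = 1 ∧ w.1 + w.2 = d := by
      rcases mem_insert.1 hw with rfl | hw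
      · exact ⟨hu, hud⟩
      · rw [mem_singleton.1 hw]; exact ⟨hv, hvd⟩
    refine mem_filter.2 ⟨?_, by simp only [Prod.fst_add, Prod.snd_add]; omega⟩
    by_cases h : p + w ∈ X
    · exact mem_union_left _ h
    · exact mem_union_right _ (hB ⟨h, p, hpX, latticeZ2_adj_add_left.2 hw1⟩)
  calc #{p ∈ X | p.1 + p.2 = c} + 1 = #{p ∈ X | p.1 + p.2 = c} + #{u, v} - 1 := by
        rw [card_pair huv]; omega
    _ ≤ #({p ∈ X | p.1 + p.2 = c} + {u, v}) :=
        cauchy_davenport_of_isAddTorsionFree hne (insert_nonempty _ _)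
    _ ≤ #{p ∈ X ∪ B | p.1 + p.2 = c + d} := card_le_card hsub
    _ ≤ #{p ∈ X | p.1 + p.2 = c + d} + #{p ∈ B | p.1 + p.2 = c + d} := by
        rw [filter_union]; exact card_union_le _ _

theorem eight_mul_card_le_sq_latticeZ2 {X B : Finset (ℤ × ℤ)}
    (hB : vertexBoundary latticeZ2 ↑X ⊆ ↑B) (hX : X.Nonempty) : 8 * #X ≤ (#B - 1) ^ 2 :=
  eight_mul_card_le_sq (φ := fun p => p.1 + p.2)
    (fun c hne => by
      simpa using card_diag_add_one_le hB hne (u := (-1, 0)) (v := (0, -1)) (d := -1)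
        (by decide) (by simp [l1]) (by simp [l1]) (by simp) (by simp))
    (fun c hne => card_diag_add_one_le hB hne (u := (1, 0)) (v := (0, 1))
        (by decide) (by simp [l1]) (by simp [l1]) (by simp) (by simp))
    hX

theorem eight_mul_le_sq_isoNum_latticeZ2 {n : ℕ} (hn : 0 < n) :
    8 * n ≤ (isoNum latticeZ2 n - 1) ^ 2 := by
  obtain ⟨X, hX, hcard, hbd, hiso⟩ := exists_isoNum_latticeZ2 n
  subst hcard
  rw [← hiso, Set.ncard_eq_toFinset_card X hX, Set.ncard_eq_toFinset_card _ hbd]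
  refine eight_mul_card_le_sq_latticeZ2 (by simp) ?_
  simpa using Set.nonempty_of_ncard_ne_zero (s := X) (by omega)

end Lattice

section Ball

def l1Ball (k : ℕ) : Finset (ℤ × ℤ) := {p ∈ Icc (-(k : ℤ)) k ×ˢ Icc (-(k : ℤ)) k | l1 p ≤ k}

def l1Sphere (r : ℕ) : Finset (ℤ × ℤ) := {p ∈ Icc (-(r : ℤ)) r ×ˢ Icc (-(r : ℤ)) r | l1 p = r}

theorem mem_l1Ball {k : ℕ} {p : ℤ × ℤ} : p ∈ l1Ball k ↔ l1 p ≤ k := by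
  simp only [l1Ball, l1, mem_filter, mem_product, mem_Icc, Int.abs_eq_natAbs]
  omega

theorem mem_l1Sphere {r : ℕ} {p : ℤ × ℤ} : p ∈ l1Sphere r ↔ l1 p = r := by
  simp only [l1Sphere, l1, mem_filter, mem_product, mem_Icc, Int.abs_eq_natAbs]
  omega

theorem card_l1Sphere {r : ℕ} (hr : 0 < r) : #(l1Sphere r) = 4 * r := by
  have hsplit : l1Sphere r = (Icc (-(r : ℤ)) r).image (fun a : ℤ => (a, (r : ℤ) - |a|)) ∪
      (Ioo (-(r : ℤ)) r).image (fun a : ℤ => (a, |a| - (r : ℤ))) := by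
    ext ⟨a, b⟩
    simp only [mem_l1Sphere, l1, mem_union, mem_image, mem_Icc, mem_Ioo, Prod.ext_iff,
      Int.abs_eq_natAbs]
    constructor
    · intro h
      rcases le_or_gt 0 b with hb | hb
      · exact .inl ⟨a, by omega, rfl, by omega⟩
      · exact .inr ⟨a, by omega, rfl, by omega⟩
    · rintro (⟨a, ha, rfl, rfl⟩ | ⟨a, ha, rfl, rfl⟩) <;> omega
  have hinj : ∀ f : ℤ → ℤ, Function.Injective fun a => (a, f a) :=
    fun f a b h => (Prod.ext_iff.1 h).1
  rw [hsplit, card_union_of_disjoint, card_image_of_injective _ (hinj _),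
    card_image_of_injective _ (hinj _), Int.card_Icc, Int.card_Ioo]
  · omega
  · simp only [disjoint_left, mem_image, mem_Icc, mem_Ioo, Prod.ext_iff, Int.abs_eq_natAbs]
    rintro p ⟨a, ha, h1, h2⟩ ⟨b, hb, h3, h4⟩
    omega

theorem card_l1Ball (k : ℕ) : #(l1Ball k) = 2 * k * (k + 1) + 1 := by
  induction k with
  | zero => rfl
  | succ k ih =>
    have hsplit : l1Ball (k + 1) = l1Ball k ∪ l1Sphere (k + 1) := by
      ext p
      simp only [mem_union, mem_l1Ball, mem_l1Sphere]
      push_cast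
      omega
    have hdisj : Disjoint (l1Ball k) (l1Sphere (k + 1)) := by
      simp only [disjoint_left, mem_l1Ball, mem_l1Sphere]
      intro p hp hp'
      omega
    rw [hsplit, card_union_of_disjoint hdisj, ih, card_l1Sphere (by omega)]
    ring

theorem vertexBoundary_l1Ball_subset (k : ℕ) :
    vertexBoundary latticeZ2 ↑(l1Ball k) ⊆ ↑(l1Sphere (k + 1)) := by
  rintro z ⟨hz, x, hx, hzx⟩
  have hzx : |z.1 - x.1| + |z.2 - x.2| = 1 := hzx
  rw [mem_coe, mem_l1Ball] at hz hx
  rw [mem_coe, mem_l1Sphere]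
  simp only [l1, Int.abs_eq_natAbs] at hz hx hzx ⊢
  omega

theorem isoNum_latticeZ2_le (k : ℕ) : isoNum latticeZ2 (2 * k * (k + 1) + 1) ≤ 4 * k + 4 := by
  have hsub := vertexBoundary_l1Ball_subset k
  have hle := isoNum_le_ncard (G := latticeZ2) (finite_toSet (l1Ball k))
    ((finite_toSet _).subset hsub)
  rw [Set.ncard_coe_finset, card_l1Ball] at hle
  calc _ ≤ _ := hle
    _ ≤ (↑(l1Sphere (k + 1)) : Set (ℤ × ℤ)).ncard := Set.ncard_le_ncard hsub (finite_toSet _)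
    _ = 4 * k + 4 := by rw [Set.ncard_coe_finset, card_l1Sphere (by omega)]; ring

end Ball

/-- **Lemma (isoperimetric numbers of the lattice graph `(ℤ², ℓ¹)`).**
`∂_V^{n+1} ≥ ∂_V^n` for all `n ≥ 1`, and `∂_V^n = 4k + 4` when `n = 2k(k+1) + 1`. -/
theorem latticeZ2_isoNum :
    (∀ n : ℕ, 1 ≤ n → isoNum latticeZ2 n ≤ isoNum latticeZ2 (n + 1))
    ∧ (∀ k : ℕ, isoNum latticeZ2 (2 * k * (k + 1) + 1) = 4 * k + 4) := by
  refine ⟨fun n _ => monotone_isoNum_latticeZ2 n.le_succ,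
    fun k => le_antisymm (isoNum_latticeZ2_le k) ?_⟩
  have hlow := eight_mul_le_sq_isoNum_latticeZ2 (n := 2 * k * (k + 1) + 1) (by omega)
  by_contra! hlt
  have hsq := Nat.pow_le_pow_left (show isoNum latticeZ2 (2 * k * (k + 1) + 1) - 1 ≤ 4 * k + 2 by
    omega) 2
  nlinarith
end
end

section
/- Let η be the spiral labelling of ℤ² and suppose m < n are positive integers such that η(m) and η(n) are adjacent in the lattice graph (ℤ², ℓ¹). Then n ≤ m + 7·√m. -/
open scoped ENNReal Classical

noncomputable section

/-!
On each of four sectors of `ℤ²` bounded by the diagonals the spiral label is a single quadratic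
polynomial, e.g. `4x² - 3x + 1 + y` on the right sector `-x < y ≤ x`. Taking the bottom sector one
column wider, `y ≤ x ≤ 1 - y`, puts the two kinds of steps across the seam (where one ring of the
spiral ends and the next begins) inside it; as a unit step never crosses a diagonal, any two
adjacent points then lie in a common sector. There the labels of adjacent points on the ring
`r = max(|x|, |y|)` differ by at most `8r + 7`, while the smaller label is about `4r²`, which gives
`(n - m)² ≤ 49 m`, with equality for `m = 1`, `n = 8`.
-/

/-- On the ring `max(|x|, |y|) = r` the labels run counterclockwise from `(2r-1)² + 1` at
`(r, 1-r)` to `(2r+1)²` at `(r, -r)`; the four branches are the right, top, left and bottom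
sides. -/
def spiralLabel : ℤ × ℤ → ℤ
  | (x, y) =>
    if -y < x then
      if y ≤ x then 4 * x ^ 2 - 3 * x + 1 + y else 4 * y ^ 2 - y + 1 - x
    else
      if x ≤ y then 4 * x ^ 2 - x + 1 - y else 4 * y ^ 2 - 3 * y + 1 + x

theorem spiralLabel_spiralNext (p : ℤ × ℤ) :
    spiralLabel (spiralNext p) = spiralLabel p + 1 := by
  obtain ⟨x, y⟩ := p
  simp only [spiralNext, spiralLabel]
  grind [le_antisymm]

theorem spiralLabel_spiral (k : ℕ) : spiralLabel (spiral k) = k + 1 := by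
  induction k with
  | zero => norm_num [spiral, spiralLabel]
  | succ k ih =>
    rw [spiral, Function.iterate_succ_apply', ← spiral, spiralLabel_spiralNext, ih]
    push_cast
    ring

theorem latticeZ2_adj_iff {x y a b : ℤ} :
    latticeZ2.Adj (x, y) (a, b) ↔
      (x + 1 = a ∧ y = b) ∨ (x - 1 = a ∧ y = b) ∨ (x = a ∧ y + 1 = b) ∨ (x = a ∧ y - 1 = b) := by
  change |x - a| + |y - b| = 1 ↔ _
  rcases abs_cases (x - a) with ⟨hx, _⟩ | ⟨hx, _⟩ <;>
    rcases abs_cases (y - b) with ⟨hy, _⟩ | ⟨hy, _⟩ <;> rw [hx, hy] <;> omega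

section Sectors

variable {x y : ℤ}

theorem spiralLabel_of_right (h₁ : -x < y) (h₂ : y ≤ x) :
    spiralLabel (x, y) = 4 * x ^ 2 - 3 * x + 1 + y := by
  simp only [spiralLabel]
  grind [le_antisymm]

theorem spiralLabel_of_top (h₁ : -y ≤ x) (h₂ : x ≤ y) :
    spiralLabel (x, y) = 4 * y ^ 2 - y + 1 - x := by
  simp only [spiralLabel]
  grind [le_antisymm]

theorem spiralLabel_of_left (h₁ : x ≤ y) (h₂ : y ≤ -x) :
    spiralLabel (x, y) = 4 * x ^ 2 - x + 1 - y := by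
  simp only [spiralLabel]
  grind [le_antisymm]

theorem spiralLabel_of_bottom (h₁ : y ≤ x) (h₂ : x ≤ 1 - y) :
    spiralLabel (x, y) = 4 * y ^ 2 - 3 * y + 1 + x := by
  simp only [spiralLabel]
  grind [le_antisymm]

end Sectors

theorem latticeZ2_adj_common_sector {x y a b : ℤ} (h : latticeZ2.Adj (x, y) (a, b)) :
    (-x < y ∧ y ≤ x ∧ -a < b ∧ b ≤ a) ∨ (-y ≤ x ∧ x ≤ y ∧ -b ≤ a ∧ a ≤ b) ∨
    (x ≤ y ∧ y ≤ -x ∧ a ≤ b ∧ b ≤ -a) ∨ (y ≤ x ∧ x ≤ 1 - y ∧ b ≤ a ∧ a ≤ 1 - b) := by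
  rcases latticeZ2_adj_iff.1 h with ⟨rfl, rfl⟩ | ⟨rfl, rfl⟩ | ⟨rfl, rfl⟩ | ⟨rfl, rfl⟩ <;> omega

theorem spiralLabel_sub_sq_le_of_adj {p q : ℤ × ℤ} (hadj : latticeZ2.Adj p q)
    (hlt : spiralLabel p < spiralLabel q) :
    (spiralLabel q - spiralLabel p) ^ 2 ≤ 49 * spiralLabel p := by
  obtain ⟨x, y⟩ := p
  obtain ⟨a, b⟩ := q
  rcases latticeZ2_adj_common_sector hadj with
    ⟨hp₁, hp₂, hq₁, hq₂⟩ | ⟨hp₁, hp₂, hq₁, hq₂⟩ | ⟨hp₁, hp₂, hq₁, hq₂⟩ | ⟨hp₁, hp₂, hq₁, hq₂⟩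
  on_goal 1 => rw [spiralLabel_of_right hp₁ hp₂, spiralLabel_of_right hq₁ hq₂] at hlt ⊢
  on_goal 2 => rw [spiralLabel_of_top hp₁ hp₂, spiralLabel_of_top hq₁ hq₂] at hlt ⊢
  on_goal 3 => rw [spiralLabel_of_left hp₁ hp₂, spiralLabel_of_left hq₁ hq₂] at hlt ⊢
  on_goal 4 => rw [spiralLabel_of_bottom hp₁ hp₂, spiralLabel_of_bottom hq₁ hq₂] at hlt ⊢
  all_goals
    rcases latticeZ2_adj_iff.1 hadj with ⟨rfl, rfl⟩ | ⟨rfl, rfl⟩ | ⟨rfl, rfl⟩ | ⟨rfl, rfl⟩ <;>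
      nlinarith [sq_nonneg (2 * x - 1), sq_nonneg (2 * y - 1)]

theorem le_add_mul_sqrt_of_sub_sq_le {a b c : ℝ} (hc : 0 ≤ c) (h : (b - a) ^ 2 ≤ c ^ 2 * a) :
    b ≤ a + c * √a := by
  have habs := Real.abs_le_sqrt h
  rw [Real.sqrt_mul (sq_nonneg c), Real.sqrt_sq hc] at habs
  linarith [le_abs_self (b - a)]

/-- **Lemma (spiral labels of adjacent vertices).**  If `m < n` are positive integers
whose spiral-labelled vertices `η(m) = spiral (m-1)` and `η(n) = spiral (n-1)` are
adjacent in the lattice graph `(ℤ², ℓ¹)`, then `n ≤ m + 7√m`. -/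
theorem spiral_adjacent_label_gap (m n : ℕ) (hm : 1 ≤ m) (hmn : m < n)
    (hadj : latticeZ2.Adj (spiral (m - 1)) (spiral (n - 1))) :
    (n : ℝ) ≤ (m : ℝ) + 7 * Real.sqrt m := by
  have hlabel : ∀ k, 1 ≤ k → spiralLabel (spiral (k - 1)) = k := fun k hk => by
    rw [spiralLabel_spiral]
    omega
  have hgap := spiralLabel_sub_sq_le_of_adj hadj (by
    rw [hlabel m hm, hlabel n (by omega)]
    exact_mod_cast hmn)
  rw [hlabel m hm, hlabel n (by omega)] at hgap
  refine le_add_mul_sqrt_of_sub_sq_le (by norm_num) ?_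
  exact_mod_cast (by linarith : ((n : ℤ) - m) ^ 2 ≤ 7 ^ 2 * m)
end
end

section
/- Let v_1, v_2, … be a Wang–Wang enumeration of ℤ² and let G_c be the universal comparison graph of the lattice graph (ℤ², ℓ¹). Then for every edge {a, b} of G_c, the vertices v_a and v_b are adjacent in the lattice graph; in other words, the map n ↦ v_n sends G_c to a spanning tree of (ℤ², ℓ¹), so G_c is obtained from ℤ² by removing some of the edges between consecutive ℓ¹-spheres. -/
open scoped ENNReal Classical

noncomputable section

/-!
If `v` lists the vertices so that the first `n` of them have as boundary exactly the next
`∂_V^n`, then every `v j` with `n ≤ j < n + ∂_V^n` has a neighbour among `v 0, …, v (n-1)`;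
if moreover `j ≥ (n-1) + ∂_V^{n-1}`, then `v j` lies outside the boundary of the first `n - 1`
vertices, so that neighbour can only be `v (n-1)`. These are exactly the edges of `G_c`.
-/

open Function

namespace SimpleGraph

variable {V : Type*} {G : SimpleGraph V} {v : ℕ → V}

def IsBoundaryEnumeration (G : SimpleGraph V) (v : ℕ → V) : Prop :=
  ∀ n : ℕ, 1 ≤ n →
    vertexBoundary G (v '' {k | k < n}) = v '' {k | n ≤ k ∧ k < n + isoNum G n}

lemma IsBoundaryEnumeration.apply_mem_vertexBoundary_iff (hbd : IsBoundaryEnumeration G v)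
    (hv : Injective v) {n j : ℕ} (hn : 1 ≤ n) :
    v j ∈ vertexBoundary G (v '' {k | k < n}) ↔ n ≤ j ∧ j < n + isoNum G n := by
  rw [hbd n hn, hv.mem_set_image, Set.mem_ofPred_eq]

lemma IsBoundaryEnumeration.adj_of_lt_of_isoNum₀_le (hbd : IsBoundaryEnumeration G v)
    (hv : Injective v) {i j : ℕ} (hij : i < j) (hj : j < i + 1 + isoNum G (i + 1))
    (hj' : i + isoNum₀ G i ≤ j) : G.Adj (v j) (v i) := by
  obtain ⟨-, _, ⟨m, hm, rfl⟩, hadj⟩ :=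
    (hbd.apply_mem_vertexBoundary_iff hv (Nat.le_add_left 1 i)).2 ⟨hij, hj⟩
  obtain rfl | hmi : m = i ∨ m < i := by rw [Set.mem_ofPred_eq] at hm; omega
  · exact hadj
  · have hi : i ≠ 0 := by omega
    have hmem : v j ∈ vertexBoundary G (v '' {k | k < i}) := by
      refine ⟨fun hji => ?_, v m, ⟨m, hmi, rfl⟩, hadj⟩
      rw [hv.mem_set_image, Set.mem_ofPred_eq] at hji
      omega
    have := ((hbd.apply_mem_vertexBoundary_iff hv (Nat.one_le_iff_ne_zero.2 hi)).1 hmem).2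
    rw [isoNum₀, if_neg hi] at hj'
    omega

lemma IsBoundaryEnumeration.adj_of_cAdj (hbd : IsBoundaryEnumeration G v) (hv : Injective v)
    {a b : ℕ+} (hab : cAdj G a b) : G.Adj (v ((a : ℕ) - 1)) (v ((b : ℕ) - 1)) := by
  obtain ⟨hlt, hlo, hhi⟩ := hab
  have hlt' : (a : ℕ) < b := hlt
  have ha := a.pos
  refine (hbd.adj_of_lt_of_isoNum₀_le hv (by omega) ?_ (by omega)).symm
  rw [Nat.sub_add_cancel ha]
  omega

end SimpleGraph

theorem comparisonGraph_spanning_tree_general (v : ℕ → ℤ × ℤ) (hbij : Function.Bijective v)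
    (hbd : ∀ n : ℕ, 1 ≤ n →
      vertexBoundary latticeZ2 (v '' {k | k < n})
        = v '' {k | n ≤ k ∧ k < n + isoNum latticeZ2 n}) :
    ∀ a b : ℕ+, (comparisonGraph latticeZ2).Adj a b →
      latticeZ2.Adj (v ((a : ℕ) - 1)) (v ((b : ℕ) - 1)) := by
  have hbd : latticeZ2.IsBoundaryEnumeration v := hbd
  rintro a b (hab | hba)
  · exact hbd.adj_of_cAdj hbij.injective hab
  · exact (hbd.adj_of_cAdj hbij.injective hba).symm

/-- **Lemma (the comparison graph embeds into `ℤ²` along a Wang–Wang enumeration).**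
Let `v 0, v 1, …` be a Wang–Wang enumeration of `ℤ²` (`v (k-1)` is the `k`-th vertex):
it respects the `ℓ¹`-norm, and the vertex boundary of the first `n` vertices is exactly
the next `∂_V^n` vertices, for every `n ≥ 1`.  Then for every edge `{a, b}` of the
universal comparison graph `G_c` of the lattice graph, the vertices `v_a` and `v_b` are
adjacent in `(ℤ², ℓ¹)`; in other words, `n ↦ v_n` sends `G_c` to a spanning tree of the
lattice graph. -/
theorem comparisonGraph_spanning_tree (v : ℕ → ℤ × ℤ) (hbij : Function.Bijective v)
    (hnorm : ∀ i j : ℕ, l1 (v i) < l1 (v j) → i < j)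
    (hbd : ∀ n : ℕ, 1 ≤ n →
      vertexBoundary latticeZ2 (v '' {k | k < n})
        = v '' {k | n ≤ k ∧ k < n + isoNum latticeZ2 n}) :
    ∀ a b : ℕ+, (comparisonGraph latticeZ2).Adj a b →
      latticeZ2.Adj (v ((a : ℕ) - 1)) (v ((b : ℕ) - 1)) :=
  comparisonGraph_spanning_tree_general v hbij hbd
end
end
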